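/- Let B₁ ⊂ B₂ be two axis-aligned boxes in ℝ³ with the same xy-projection containment proj(B₂) ⊂ proj(B₁), stacked with B₂ on top of B₁ sharing part of the top face of B₁. Then any point of B₁ ∪ B₂ is visible from the top face of B₁ minus the contact rectangle, i.e., the union is guarded by the annular horizontal face. -/
import Mathlib

lemma box_convex (a b c d e f : ℝ) :
    Convex ℝ {p : ℝ × ℝ × ℝ | a ≤ p.1 ∧ p.1 ≤ b ∧ c ≤ p.2.1 ∧ p.2.1 ≤ d ∧
      e ≤ p.2.2 ∧ p.2.2 ≤ f} := by
  have : {p : ℝ × ℝ × ℝ | a ≤ p.1 ∧ p.1 ≤ b ∧ c ≤ p.2.1 ∧ p.2.1 ≤ d ∧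
      e ≤ p.2.2 ∧ p.2.2 ≤ f} = (Set.Icc a b) ×ˢ ((Set.Icc c d) ×ˢ (Set.Icc e f)) := by
    ext p
    simp only [Set.mem_prod, Set.mem_Icc, Set.mem_setOf_eq]
    tauto
  rw [this]
  exact (convex_Icc a b).prod ((convex_Icc c d).prod (convex_Icc e f))

/-- Type-4 configuration of two stacked bricks: `B₁ = [a₁,b₁]×[c₁,d₁]×[z₀,z₁]` and
`B₂ = [a₂,b₂]×[c₂,d₂]×[z₁,z₂]` with `a₁ < a₂ ≤ b₂ < b₁` and `c₁ < c₂ ≤ d₂ < d₁`.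
Every point of `P = B₁ ∪ B₂` is visible (via a segment contained in `P`) from some
point of the annular horizontal face
`F = ([a₁,b₁]×[c₁,d₁] \ (a₂,b₂)×(c₂,d₂)) × {z₁}`. -/
theorem annular_face_guards_union
    (a₁ b₁ c₁ d₁ a₂ b₂ c₂ d₂ z₀ z₁ z₂ : ℝ)
    (hz : z₀ < z₁ ∧ z₁ < z₂)
    (hx : a₁ < a₂ ∧ a₂ ≤ b₂ ∧ b₂ < b₁) (hy : c₁ < c₂ ∧ c₂ ≤ d₂ ∧ d₂ < d₁)
    (B₁ B₂ P F : Set (ℝ × ℝ × ℝ))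
    (hB₁ : B₁ = {p | a₁ ≤ p.1 ∧ p.1 ≤ b₁ ∧ c₁ ≤ p.2.1 ∧ p.2.1 ≤ d₁ ∧
                      z₀ ≤ p.2.2 ∧ p.2.2 ≤ z₁})
    (hB₂ : B₂ = {p | a₂ ≤ p.1 ∧ p.1 ≤ b₂ ∧ c₂ ≤ p.2.1 ∧ p.2.1 ≤ d₂ ∧
                      z₁ ≤ p.2.2 ∧ p.2.2 ≤ z₂})
    (hP : P = B₁ ∪ B₂)
    (hF : F = {p | a₁ ≤ p.1 ∧ p.1 ≤ b₁ ∧ c₁ ≤ p.2.1 ∧ p.2.1 ≤ d₁ ∧ p.2.2 = z₁ ∧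
                    ¬(a₂ < p.1 ∧ p.1 < b₂ ∧ c₂ < p.2.1 ∧ p.2.1 < d₂)}) :
    ∀ p ∈ P, ∃ q ∈ F, segment ℝ q p ⊆ P := by
  obtain ⟨hz01, hz12⟩ := hz
  obtain ⟨hxa, hxb, hxc⟩ := hx
  obtain ⟨hya, hyb, hyc⟩ := hy
  intro p hp
  refine ⟨(a₂, p.2.1, z₁), ?_, ?_⟩
  · rw [hP] at hp
    rw [hF]
    rcases hp with hp | hp
    · rw [hB₁] at hp
      obtain ⟨h1, h2, h3, h4, h5, h6⟩ := hp
      exact ⟨le_of_lt hxa, le_of_lt (lt_of_le_of_lt hxb hxc), h3, h4, rfl,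
        fun h => lt_irrefl a₂ h.1⟩
    · rw [hB₂] at hp
      obtain ⟨h1, h2, h3, h4, h5, h6⟩ := hp
      exact ⟨le_of_lt hxa, le_of_lt (lt_of_le_of_lt hxb hxc),
        le_of_lt (lt_of_lt_of_le hya h3), le_of_lt (lt_of_le_of_lt h4 hyc), rfl,
        fun h => lt_irrefl a₂ h.1⟩
  · rw [hP] at hp ⊢
    rcases hp with hp | hp
    · rw [hB₁] at hp
      obtain ⟨h1, h2, h3, h4, h5, h6⟩ := hp
      intro x hx
      left
      rw [hB₁]
      have hq : (a₂, p.2.1, z₁) ∈ {p : ℝ × ℝ × ℝ | a₁ ≤ p.1 ∧ p.1 ≤ b₁ ∧ c₁ ≤ p.2.1 ∧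
          p.2.1 ≤ d₁ ∧ z₀ ≤ p.2.2 ∧ p.2.2 ≤ z₁} :=
        ⟨le_of_lt hxa, le_of_lt (lt_of_le_of_lt hxb hxc), h3, h4, le_of_lt hz01, le_refl _⟩
      exact box_convex a₁ b₁ c₁ d₁ z₀ z₁ |>.segment_subset hq
        ⟨h1, h2, h3, h4, h5, h6⟩ hx
    · rw [hB₂] at hp
      obtain ⟨h1, h2, h3, h4, h5, h6⟩ := hp
      intro x hx
      right
      rw [hB₂]
      have hq : (a₂, p.2.1, z₁) ∈ {p : ℝ × ℝ × ℝ | a₂ ≤ p.1 ∧ p.1 ≤ b₂ ∧ c₂ ≤ p.2.1 ∧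
          p.2.1 ≤ d₂ ∧ z₁ ≤ p.2.2 ∧ p.2.2 ≤ z₂} :=
        ⟨le_refl _, hxb, h3, h4, le_refl _, le_of_lt hz12⟩
      exact box_convex a₂ b₂ c₂ d₂ z₁ z₂ |>.segment_subset hq
        ⟨h1, h2, h3, h4, h5, h6⟩ hx
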